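/- Let S = R[x;σ] be the skew polynomial ring with σ a ring automorphism of R, and let M be a right R-module. If the inverse polynomial module M[x⁻¹], regarded as a right R-module, is a completely σ-compatible Bass module, then Att(M[x⁻¹]_S) = { P[x] : P ∈ Att(M_R) }. -/

import Mathlib

/-!
STATEMENT 15. Let `S = R[x;σ]` be the skew polynomial ring with `σ` a ring automorphism of `R`,
and let `M` be a right `R`-module.  If the inverse polynomial module `M[x⁻¹]`, regarded as a
right `R`-module, is a completely `σ`-compatible Bass module, then
`Att(M[x⁻¹]_S) = { P[x] : P ∈ Att(M_R) }`.

Encoding: right modules over a ring `T` are modules over `Tᵐᵒᵖ` (`m·t := op t • m`).  The skew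
polynomial ring is axiomatized by `hbasis` and `hcomm` (`x·r = σ(r)·x`).  The inverse polynomial
module `M[x⁻¹]` is `ℕ →₀ M`, a right `S`-module with action
`(m x⁻ⁱ)·(r xʲ) = m σ⁻ⁱ(r) x^{-(i-j)}` if `j ≤ i` and `0` otherwise (`hact`); restricting
scalars along `ι : R →+* S` makes it a right `R`-module, whose submodules are encoded as subsets
closed under the restricted action (`IsRSubmoduleSet`).  `hcompatInv` says that `M[x⁻¹]` is
completely `σ`-compatible as a right `R`-module, and `hBass` that it is a Bass module (every
proper submodule is contained in a maximal submodule).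
-/

open MulOpposite

/-- A prime ideal of a (possibly noncommutative) ring `T`, as a set: a proper two-sided ideal
`P` such that `aTb ⊆ P` implies `a ∈ P` or `b ∈ P`. -/
def IsPrimeIdealSet (T : Type*) [Ring T] (P : Set T) : Prop :=
  (0 : T) ∈ P ∧ (∀ a ∈ P, ∀ b ∈ P, a + b ∈ P) ∧
    (∀ a ∈ P, ∀ t : T, t * a ∈ P ∧ a * t ∈ P) ∧ P ≠ Set.univ ∧
    ∀ a b : T, (∀ t : T, a * t * b ∈ P) → a ∈ P ∨ b ∈ P

/-- The annihilator of the quotient of the right `T`-module `L` by the subset `Nset`, that is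
`{t : T | L·t ⊆ Nset}`. -/
def annIn (T : Type*) [Ring T] (L : Type*) [AddCommGroup L] [Module Tᵐᵒᵖ L]
    (Nset : Set L) : Set T :=
  {t : T | ∀ l : L, op t • l ∈ Nset}

/-- The quotient `L/N` is a coprime right `T`-module: it is nonzero and
`ann_T(L/N) = ann_T((L/N)/(N'/N))` for every proper submodule `N'/N` of `L/N`; equivalently,
`ann_T(L/N) = ann_T(L/N')` for every submodule `N ≤ N' < L`. -/
def CoprimeQuot (T : Type*) [Ring T] (L : Type*) [AddCommGroup L] [Module Tᵐᵒᵖ L]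
    (N : Submodule Tᵐᵒᵖ L) : Prop :=
  (∃ l : L, l ∉ N) ∧
    ∀ N' : Submodule Tᵐᵒᵖ L, N ≤ N' → N' ≠ ⊤ →
      annIn T L (N : Set L) = annIn T L (N' : Set L)

/-- The set of attached prime ideals of the right `T`-module `L`: prime ideals of the form
`ann_T(L/N)` with `L/N` a coprime quotient of `L`. -/
def AttSet (T : Type*) [Ring T] (L : Type*) [AddCommGroup L] [Module Tᵐᵒᵖ L] : Set (Set T) :=
  {P | IsPrimeIdealSet T P ∧
    ∃ N : Submodule Tᵐᵒᵖ L, CoprimeQuot T L N ∧ P = annIn T L (N : Set L)}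

/-- For an ideal `P` of `R`, `polyIn ι x P` is `P[x]`: the set of polynomials in `S` all of
whose coefficients lie in `P`. -/
def polyIn {R S : Type*} [Ring R] [Ring S] (ι : R →+* S) (x : S) (P : Set R) : Set S :=
  {s : S | ∃ c : ℕ →₀ R, (∀ k, c k ∈ P) ∧ s = c.sum fun k r => ι r * x ^ k}

/-- A subset of the right `A`-module `L` that is an `R`-submodule for the right `R`-action
obtained by restricting scalars along `ι : R →+* A`. -/
def IsRSubmoduleSet {R A : Type*} [Ring R] [Ring A] (ι : R →+* A)
    (L : Type*) [AddCommGroup L] [Module Aᵐᵒᵖ L] (Q : Set L) : Prop :=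
  (0 : L) ∈ Q ∧ (∀ f ∈ Q, ∀ g ∈ Q, f + g ∈ Q) ∧ (∀ f ∈ Q, -f ∈ Q) ∧
    ∀ f ∈ Q, ∀ r : R, op (ι r) • f ∈ Q


/-!
Let `𝒩` be a proper `S`-submodule of `M[x⁻¹]`. By the Bass property it lies in a maximal
`R`-submodule `Q`; let `α` be the least degree with `M x⁻ᵅ ⊄ Q`. The component
`B = {m | m x⁻ᵅ ∈ Q}` is a maximal submodule of `M`, and maximality of `Q` together with
`σ`-compatibility shows that `ann_R(M/B)` moves every component of `M[x⁻¹]` into `Q`. Extracting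
coefficients degree by degree then gives `ann_S(M[x⁻¹]/C) = ann_R(M/B)[x]` for the largest
`S`-submodule `C ⊆ Q`, and coprimality of `M[x⁻¹]/𝒩` gives `ann(M[x⁻¹]/𝒩) = ann(M[x⁻¹]/C)`.

Conversely, for a coprime quotient `M/N` one has `ann_S(M[x⁻¹]/N[x⁻¹]) = ann_R(M/N)[x]`;
running the construction above on a proper `𝒩' ⊇ N[x⁻¹]` gives a maximal `B ⊇ N`, hence
`ann(M/B) = ann(M/N)`, and so `M[x⁻¹]/N[x⁻¹]` is coprime.
-/

open Finsupp (single)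

section Coprime

variable {T L : Type*} [Ring T] [AddCommGroup L] [Module Tᵐᵒᵖ L]

lemma annIn_mono {N N' : Set L} (h : N ⊆ N') : annIn T L N ⊆ annIn T L N' :=
  fun _ ht l => h (ht l)

lemma CoprimeQuot.ne_top {N : Submodule Tᵐᵒᵖ L} (h : CoprimeQuot T L N) : N ≠ ⊤ := by
  rintro rfl
  obtain ⟨l, hl⟩ := h.1
  exact hl Submodule.mem_top

lemma CoprimeQuot.of_isCoatom {N : Submodule Tᵐᵒᵖ L} (h : IsCoatom N) : CoprimeQuot T L N :=
  ⟨SetLike.exists_not_mem_of_ne_top N h.1 rfl, fun N' hle hne => by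
    rw [(h.le_iff.mp hle).resolve_left hne]⟩

lemma isPrimeIdealSet_annIn {N : Submodule Tᵐᵒᵖ L} (h : CoprimeQuot T L N) :
    IsPrimeIdealSet T (annIn T L N) := by
  refine ⟨fun l => by simp, fun a ha b hb l => ?_, fun a ha t => ⟨fun l => ?_, fun l => ?_⟩, ?_, ?_⟩
  · rw [op_add, add_smul]
    exact N.add_mem (ha l) (hb l)
  · rw [op_mul, mul_smul]
    exact ha _
  · rw [op_mul, mul_smul]
    exact N.smul_mem _ (ha l)
  · intro huniv
    have h1 : (1 : T) ∈ annIn T L N := huniv ▸ Set.mem_univ 1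
    exact h.ne_top (Submodule.eq_top_iff'.mpr fun l => by simpa using h1 l)
  · intro a b hab
    by_cases hb : b ∈ annIn T L N
    · exact Or.inr hb
    obtain ⟨l₁, hl₁⟩ : ∃ l, op b • l ∉ N := by simpa [annIn] using hb
    -- `{l | l T b ⊆ N}` is a proper submodule above `N`, so it has the annihilator of `N`
    let N' : Submodule Tᵐᵒᵖ L :=
      { carrier := {l | ∀ t : T, op b • op t • l ∈ N}
        add_mem' := fun hu hv t => by
          rw [smul_add, smul_add]
          exact N.add_mem (hu t) (hv t)
        zero_mem' := fun t => by simp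
        smul_mem' := fun s u hu t => by
          rw [← op_unop s, ← mul_smul (op t), ← op_mul]
          exact hu _ }
    have hNN' : N ≤ N' := fun u hu t => N.smul_mem _ (N.smul_mem _ hu)
    have hN'top : N' ≠ ⊤ := fun htop => hl₁ <| by
      simpa using (htop ▸ Submodule.mem_top : l₁ ∈ N') 1
    left
    rw [h.2 N' hNN' hN'top]
    intro l t
    simpa only [op_mul, mul_smul, SetLike.mem_coe] using hab t l

lemma annIn_mem_attSet {N : Submodule Tᵐᵒᵖ L} (h : CoprimeQuot T L N) :
    annIn T L N ∈ AttSet T L :=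
  ⟨isPrimeIdealSet_annIn h, N, h, rfl⟩

end Coprime

lemma AddSubgroup.mem_of_forall_single_mem {ι M : Type*} [AddCommGroup M]
    (Q : AddSubgroup (ι →₀ M)) {f : ι →₀ M} (h : ∀ j, single j (f j) ∈ Q) : f ∈ Q := by
  rw [← f.sum_single]
  exact Q.sum_mem fun j _ => h j

lemma Submodule.isRSubmoduleSet {R S L : Type*} [Ring R] [Ring S] (ι : R →+* S)
    [AddCommGroup L] [Module Sᵐᵒᵖ L] (N : Submodule Sᵐᵒᵖ L) : IsRSubmoduleSet ι L N :=
  ⟨N.zero_mem, fun _ hf _ hg => N.add_mem hf hg, fun _ hf => N.neg_mem hf,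
    fun _ hf _ => N.smul_mem _ hf⟩

def IsRSubmoduleSet.toAddSubgroup {R A L : Type*} [Ring R] [Ring A] {ι : R →+* A}
    [AddCommGroup L] [Module Aᵐᵒᵖ L] {Q : Set L} (hQ : IsRSubmoduleSet ι L Q) :
    AddSubgroup L where
  carrier := Q
  zero_mem' := hQ.1
  add_mem' ha hb := hQ.2.1 _ ha _ hb
  neg_mem' ha := hQ.2.2.1 _ ha

section SkewPolynomial

variable {R : Type*} [Ring R] (σ : R ≃+* R) {S : Type*} [Ring S] (ι : R →+* S) (x : S)
  {L : Type*} [AddCommGroup L] [Module Sᵐᵒᵖ L]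

lemma iota_mul_xpow (hcomm : ∀ r : R, x * ι r = ι (σ r) * x) (n : ℕ) (r : R) :
    ι r * x ^ n = x ^ n * ι ((⇑σ.symm)^[n] r) := by
  induction n with
  | zero => simp
  | succ n ih =>
    have hstep : ι ((⇑σ.symm)^[n] r) * x = x * ι ((⇑σ.symm)^[n + 1] r) := by
      rw [hcomm, Function.iterate_succ_apply', RingEquiv.apply_symm_apply]
    rw [pow_succ, ← mul_assoc, ih, mul_assoc, hstep, ← mul_assoc, ← pow_succ]

lemma xpow_smul_iota_smul (hcomm : ∀ r : R, x * ι r = ι (σ r) * x) (k : ℕ) (r : R) (f : L) :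
    op (x ^ k) • op (ι r) • f = op (ι ((⇑σ.symm)^[k] r)) • op (x ^ k) • f := by
  rw [← mul_smul, ← mul_smul, ← op_mul, ← op_mul, iota_mul_xpow σ ι x hcomm]

variable (hspan : Function.Surjective fun c : ℕ →₀ R => c.sum fun k r => ι r * x ^ k)

def skewSubmodule (Q : AddSubgroup L) (hι : ∀ r : R, ∀ f ∈ Q, op (ι r) • f ∈ Q)
    (hx : ∀ f ∈ Q, op x • f ∈ Q) : Submodule Sᵐᵒᵖ L where
  toAddSubmonoid := Q.toAddSubmonoid
  smul_mem' s f hf := by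
    have hxpow : ∀ k, ∀ f ∈ Q, op (x ^ k) • f ∈ Q := by
      intro k
      induction k with
      | zero => simp
      | succ k ih =>
        intro f hf
        rw [pow_succ, op_mul, mul_smul]
        exact hx _ (ih f hf)
    induction s using MulOpposite.rec' with | _ s => ?_
    obtain ⟨c, rfl⟩ := hspan s
    simp only [Finsupp.sum, Finset.op_sum, Finset.sum_smul]
    exact Q.sum_mem fun k _ => by
      rw [op_mul, mul_smul]
      exact hxpow k _ (hι _ _ hf)

/-- The largest `S`-submodule contained in `Q`. -/
def skewCore (hcomm : ∀ r : R, x * ι r = ι (σ r) * x) (Q : AddSubgroup L)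
    (hι : ∀ r : R, ∀ f ∈ Q, op (ι r) • f ∈ Q) : Submodule Sᵐᵒᵖ L :=
  skewSubmodule ι x hspan
    { carrier := {f | ∀ k : ℕ, op (x ^ k) • f ∈ Q}
      zero_mem' := fun k => by simp
      add_mem' := fun hf hg k => by
        rw [smul_add]
        exact Q.add_mem (hf k) (hg k)
      neg_mem' := fun hf k => by
        rw [smul_neg]
        exact Q.neg_mem (hf k) }
    (fun r f hf k => by
      rw [xpow_smul_iota_smul σ ι x hcomm]
      exact hι _ _ (hf k))
    (fun f hf k => by
      rw [← mul_smul, ← op_mul, ← pow_succ']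
      exact hf (k + 1))

variable {σ ι x hspan}

lemma mem_of_mem_skewCore {hcomm : ∀ r : R, x * ι r = ι (σ r) * x} {Q : AddSubgroup L}
    {hι : ∀ r : R, ∀ f ∈ Q, op (ι r) • f ∈ Q} {f : L} (hf : f ∈ skewCore σ ι x hspan hcomm Q hι) :
    f ∈ Q := by
  simpa using hf 0

lemma le_skewCore {hcomm : ∀ r : R, x * ι r = ι (σ r) * x} {Q : AddSubgroup L}
    {hι : ∀ r : R, ∀ f ∈ Q, op (ι r) • f ∈ Q} {N : Submodule Sᵐᵒᵖ L} (hN : ∀ f ∈ N, f ∈ Q) :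
    N ≤ skewCore σ ι x hspan hcomm Q hι :=
  fun _ hf _ => hN _ (N.smul_mem _ hf)

lemma polyIn_subset_annIn (hcomm : ∀ r : R, x * ι r = ι (σ r) * x) (Q : AddSubgroup L)
    {A : Set R} (hAσ : ∀ n, ∀ r ∈ A, (⇑σ.symm)^[n] r ∈ A) (hA : ∀ r ∈ A, ∀ f, op (ι r) • f ∈ Q) :
    polyIn ι x A ⊆ annIn S L Q := by
  rintro _ ⟨c, hc, rfl⟩ f
  rw [Finsupp.sum, Finset.op_sum, Finset.sum_smul]
  refine Q.sum_mem fun k _ => ?_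
  rw [op_mul, mul_smul, xpow_smul_iota_smul σ ι x hcomm]
  exact hA _ (hAσ k _ (hc k)) _

end SkewPolynomial

section InversePolynomial

variable {R : Type*} [Ring R] (σ : R ≃+* R) {S : Type*} [Ring S] (ι : R →+* S) (x : S)
  (M : Type*) [AddCommGroup M] [Module Rᵐᵒᵖ M] [Module Sᵐᵒᵖ (ℕ →₀ M)]

/-- `single i m` stands for `m x⁻ⁱ`. -/
def IsInvPolyAction : Prop :=
  ∀ (m : M) (i : ℕ) (r : R) (j : ℕ),
    op (ι r * x ^ j) • single i m =
      if j ≤ i then single (i - j) (op ((⇑σ.symm)^[i] r) • m) else (0 : ℕ →₀ M)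

def IsCompletelyCompatible : Prop :=
  ∀ (N : Submodule Rᵐᵒᵖ M) (r : R) (m : M), op (σ r) • m ∈ N ↔ op r • m ∈ N

variable {σ ι x M}

lemma IsCompletelyCompatible.symm_iterate_mem_annIn_iff (hM : IsCompletelyCompatible σ M)
    (N : Submodule Rᵐᵒᵖ M) (n : ℕ) (r : R) :
    (⇑σ.symm)^[n] r ∈ annIn R M N ↔ r ∈ annIn R M N := by
  induction n with
  | zero => rfl
  | succ n ih =>
    rw [Function.iterate_succ_apply', ← ih]
    exact forall_congr' fun m => by simpa using (hM N (σ.symm ((⇑σ.symm)^[n] r)) m).symm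

variable (hact : IsInvPolyAction σ ι x M)
include hact

lemma smul_single_iota (r : R) (i : ℕ) (m : M) :
    op (ι r) • single i m = single i (op ((⇑σ.symm)^[i] r) • m) := by
  simpa using hact m i r 0

lemma iota_smul_apply (r : R) (f : ℕ →₀ M) (j : ℕ) :
    (op (ι r) • f) j = op ((⇑σ.symm)^[j] r) • f j := by
  induction f using Finsupp.induction_linear with
  | zero => simp
  | add f g hf hg => rw [smul_add, Finsupp.add_apply, hf, hg, Finsupp.add_apply, smul_add]
  | single i m =>
    rw [smul_single_iota hact]
    rcases eq_or_ne i j with rfl | hne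
    · simp
    · simp [hne]

lemma x_smul_apply (f : ℕ →₀ M) (j : ℕ) : (op x • f) j = f (j + 1) := by
  induction f using Finsupp.induction_linear with
  | zero => simp
  | add f g hf hg => rw [smul_add, Finsupp.add_apply, hf, hg, Finsupp.add_apply]
  | single i m =>
    have h := hact m i 1 1
    rw [map_one, one_mul, pow_one, Function.iterate_fixed (map_one _), op_one, one_smul] at h
    rw [h]
    split_ifs with hi
    · simp only [Finsupp.single_apply]
      exact if_congr (by omega) rfl rfl
    · rw [Finsupp.zero_apply, Finsupp.single_apply, if_neg (by omega)]

lemma iota_smul_mem (Q : AddSubgroup (ℕ →₀ M)) {A : Set R}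
    (hAσ : ∀ n, ∀ r ∈ A, (⇑σ.symm)^[n] r ∈ A)
    (hA : ∀ r ∈ A, ∀ j m, single j (op r • m) ∈ Q) {r : R} (hr : r ∈ A) (f : ℕ →₀ M) :
    op (ι r) • f ∈ Q :=
  Q.mem_of_forall_single_mem fun j => by
    rw [iota_smul_apply hact]
    exact hA _ (hAσ j r hr) _ _

lemma coeff_mem_of_forall_smul_mem (Q : AddSubgroup (ℕ →₀ M)) {A : Set R} (α : ℕ)
    (hlow : ∀ j < α, ∀ m : M, single j m ∈ Q)
    (hAα : ∀ r, (∀ m : M, single α (op r • m) ∈ Q) → r ∈ A)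
    (hA : ∀ r ∈ A, ∀ j m, single j (op r • m) ∈ Q)
    (hAσ : ∀ n r, (⇑σ.symm)^[n] r ∈ A ↔ r ∈ A)
    {c : ℕ →₀ R} (hc : ∀ f : ℕ →₀ M, op (c.sum fun k r => ι r * x ^ k) • f ∈ Q) (k : ℕ) :
    c k ∈ A := by
  classical
  induction k using Nat.strong_induction_on with
  | _ k ih =>
  by_cases hk : k ∈ c.support
  swap
  · rw [Finsupp.notMem_support_iff.mp hk]
    exact hAα 0 fun _ => by simp
  refine (hAσ (α + k) _).mp (hAα _ fun m => ?_)
  -- apply `∑ ι cₖ' xᵏ'` to `m x^{-(α+k)}`: the terms with `k' < k` lie in `Q` by induction, those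
  -- with `k' > k` have degree below `α`; hence so does the term with `k' = k`
  have hsum := hc (single (α + k) m)
  rw [Finsupp.sum, Finset.op_sum, Finset.sum_smul, ← Finset.add_sum_erase _ _ hk,
    hact m (α + k) (c k) k, if_pos (by omega), Nat.add_sub_cancel] at hsum
  refine (Q.add_mem_cancel_right (Q.sum_mem fun k' hk' => ?_)).mp hsum
  rw [hact m]
  split_ifs with hle
  · rcases lt_or_gt_of_ne (Finset.ne_of_mem_erase hk') with hlt | hgt
    · exact hA _ ((hAσ _ _).mpr (ih k' hlt)) _ _
    · exact hlow _ (by omega) _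
  · exact Q.zero_mem

end InversePolynomial

section InvPolySubmodule

variable {R : Type*} [Ring R] {σ : R ≃+* R} {S : Type*} [Ring S] {ι : R →+* S} {x : S}
  {M : Type*} [AddCommGroup M] [Module Rᵐᵒᵖ M] [Module Sᵐᵒᵖ (ℕ →₀ M)]
  (hspan : Function.Surjective fun c : ℕ →₀ R => c.sum fun k r => ι r * x ^ k)
  (hact : IsInvPolyAction σ ι x M)

/-- The submodule `N[x⁻¹]` of `M[x⁻¹]`. -/
noncomputable def invPoly (N : Submodule Rᵐᵒᵖ M) : Submodule Sᵐᵒᵖ (ℕ →₀ M) :=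
  skewSubmodule ι x hspan
    { carrier := {f | ∀ j, f j ∈ N}
      zero_mem' := fun _ => N.zero_mem
      add_mem' := fun hf hg j => N.add_mem (hf j) (hg j)
      neg_mem' := fun hf j => N.neg_mem (hf j) }
    (fun r f hf j => by
      rw [iota_smul_apply hact]
      exact N.smul_mem _ (hf j))
    (fun f hf j => by
      rw [x_smul_apply hact]
      exact hf _)

lemma single_mem_invPoly {N : Submodule Rᵐᵒᵖ M} {j : ℕ} {m : M} :
    single j m ∈ invPoly hspan hact N ↔ m ∈ N :=
  ⟨fun h => by simpa using h j, fun h i => by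
    rw [Finsupp.single_apply]
    split_ifs
    exacts [h, N.zero_mem]⟩

include hspan hact in
lemma isCompletelyCompatible_of_inv
    (hcompatInv : ∀ Q : Set (ℕ →₀ M), IsRSubmoduleSet ι (ℕ →₀ M) Q →
      ∀ (f : ℕ →₀ M) (r : R), op (ι r) • f ∈ Q ↔ op (ι (σ r)) • f ∈ Q) :
    IsCompletelyCompatible σ M := fun N r m => by
  simpa [smul_single_iota hact, single_mem_invPoly hspan hact] using
    (hcompatInv _ ((invPoly hspan hact N).isRSubmoduleSet ι) (single 0 m) r).symm

lemma annIn_invPoly (hcomm : ∀ r : R, x * ι r = ι (σ r) * x) (hM : IsCompletelyCompatible σ M)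
    (N : Submodule Rᵐᵒᵖ M) :
    annIn S (ℕ →₀ M) (invPoly hspan hact N) = polyIn ι x (annIn R M N) := by
  have hAσ := hM.symm_iterate_mem_annIn_iff N
  have hA : ∀ r ∈ annIn R M N, ∀ j m, single j (op r • m) ∈ invPoly hspan hact N :=
    fun r hr j m => (single_mem_invPoly hspan hact).mpr (hr m)
  apply subset_antisymm
  · intro s hs
    obtain ⟨c, rfl⟩ := hspan s
    exact ⟨c, coeff_mem_of_forall_smul_mem hact (invPoly hspan hact N).toAddSubgroup 0
      (by simp) (fun r hr m => (single_mem_invPoly hspan hact).mp (hr m)) hA hAσ hs, rfl⟩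
  · exact polyIn_subset_annIn hcomm (invPoly hspan hact N).toAddSubgroup
      (fun n r => (hAσ n r).mpr) fun r hr =>
        iota_smul_mem hact (invPoly hspan hact N).toAddSubgroup (fun n r => (hAσ n r).mpr) hA hr

end InvPolySubmodule

section MaximalRSubmodule

variable {R : Type*} [Ring R] {σ : R ≃+* R} {S : Type*} [Ring S] {ι : R →+* S} {x : S}
  {M : Type*} [AddCommGroup M] [Module Rᵐᵒᵖ M] [Module Sᵐᵒᵖ (ℕ →₀ M)]
  (hact : IsInvPolyAction σ ι x M) {Q : AddSubgroup (ℕ →₀ M)}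
  (hQι : ∀ r : R, ∀ f ∈ Q, op (ι r) • f ∈ Q)

def componentSubmodule (j : ℕ) : Submodule Rᵐᵒᵖ M where
  carrier := {m | single j m ∈ Q}
  add_mem' {a b} ha hb := by
    show single j (a + b) ∈ Q
    rw [Finsupp.single_add]
    exact Q.add_mem ha hb
  zero_mem' := by simp
  smul_mem' r m hm := by
    have h := hQι ((⇑σ)^[j] (unop r)) _ hm
    rwa [smul_single_iota hact, Function.LeftInverse.iterate σ.symm_apply_apply j (unop r),
      op_unop] at h

variable (hQmax : ∀ Q'' : Set (ℕ →₀ M), IsRSubmoduleSet ι (ℕ →₀ M) Q'' →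
  (Q : Set (ℕ →₀ M)) ⊆ Q'' → Q'' = Q ∨ Q'' = Set.univ)
include hQmax

lemma exists_add_single_of_not_le {α : ℕ} {N : Submodule Rᵐᵒᵖ M}
    (hN : ¬N ≤ componentSubmodule hact hQι α) (f : ℕ →₀ M) :
    ∃ q ∈ Q, ∃ n ∈ N, f = q + single α n := by
  set Q₂ : Set (ℕ →₀ M) := {f | ∃ q ∈ Q, ∃ n ∈ N, f = q + single α n}
  have hsub : IsRSubmoduleSet ι (ℕ →₀ M) Q₂ := by
    refine ⟨⟨0, Q.zero_mem, 0, N.zero_mem, by simp⟩, ?_, ?_, ?_⟩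
    · rintro _ ⟨q, hq, n, hn, rfl⟩ _ ⟨q', hq', n', hn', rfl⟩
      exact ⟨q + q', Q.add_mem hq hq', n + n', N.add_mem hn hn', by
        rw [Finsupp.single_add]; abel⟩
    · rintro _ ⟨q, hq, n, hn, rfl⟩
      exact ⟨-q, Q.neg_mem hq, -n, N.neg_mem hn, by rw [Finsupp.single_neg]; abel⟩
    · rintro _ ⟨q, hq, n, hn, rfl⟩ r
      exact ⟨_, hQι r q hq, _, N.smul_mem (op ((⇑σ.symm)^[α] r)) hn, by
        rw [smul_add, smul_single_iota hact]⟩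
  obtain ⟨n₀, hn₀, hn₀Q⟩ := SetLike.not_le_iff_exists.mp hN
  rcases hQmax Q₂ hsub (fun q hq => ⟨q, hq, 0, N.zero_mem, by simp⟩) with hQ | hQ
  · have h : single α n₀ ∈ Q₂ := ⟨0, Q.zero_mem, n₀, hn₀, (zero_add _).symm⟩
    rw [hQ] at h
    exact absurd h hn₀Q
  · exact (hQ ▸ Set.mem_univ f : f ∈ Q₂)

lemma isCoatom_componentSubmodule {α : ℕ} (hα : ∃ m, single α m ∉ Q) :
    IsCoatom (componentSubmodule hact hQι α) := by
  refine ⟨fun htop => ?_, fun N hlt => Submodule.eq_top_iff'.mpr fun m => ?_⟩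
  · obtain ⟨m, hm⟩ := hα
    exact hm (htop ▸ Submodule.mem_top : m ∈ componentSubmodule hact hQι α)
  · obtain ⟨q, hq, n, hn, hmq⟩ :=
      exists_add_single_of_not_le hact hQι hQmax hlt.not_ge (single α m)
    have hmn : m - n ∈ componentSubmodule hact hQι α := by
      show single α (m - n) ∈ Q
      rwa [Finsupp.single_sub, hmq, add_sub_cancel_right]
    simpa using N.add_mem (hlt.le hmn) hn

lemma single_smul_mem_of_mem_annIn (hM : IsCompletelyCompatible σ M) {α : ℕ}
    (hα : componentSubmodule hact hQι α ≠ ⊤) {r : R}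
    (hr : r ∈ annIn R M (componentSubmodule hact hQι α)) (j : ℕ) (m : M) :
    single j (op r • m) ∈ Q := by
  have hAσ := hM.symm_iterate_mem_annIn_iff (componentSubmodule hact hQι α)
  have hσj : (⇑σ.symm)^[j] ((⇑σ)^[j] r) = r :=
    Function.LeftInverse.iterate σ.symm_apply_apply j r
  obtain ⟨q, hq, n, -, hmq⟩ :=
    exists_add_single_of_not_le hact hQι hQmax (N := ⊤) (by rwa [top_le_iff]) (single j m)
  -- acting by `ι (σʲ r)` turns `m x⁻ʲ` into `(m r) x⁻ʲ`
  have h := congrArg (op (ι ((⇑σ)^[j] r)) • ·) hmq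
  simp only [smul_add, smul_single_iota hact, hσj] at h
  rw [h]
  exact Q.add_mem (hQι _ _ hq) ((hAσ α _).mpr ((hAσ j _).mp (by rwa [hσj])) n)

lemma annIn_skewCore_eq
    (hspan : Function.Surjective fun c : ℕ →₀ R => c.sum fun k r => ι r * x ^ k)
    (hcomm : ∀ r : R, x * ι r = ι (σ r) * x) (hM : IsCompletelyCompatible σ M) {α : ℕ}
    (hlow : ∀ j < α, ∀ m : M, single j m ∈ Q) (hα : ∃ m, single α m ∉ Q) :
    annIn S (ℕ →₀ M) (skewCore σ ι x hspan hcomm Q hQι) =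
      polyIn ι x (annIn R M (componentSubmodule hact hQι α)) := by
  have hA : ∀ r ∈ annIn R M (componentSubmodule hact hQι α), ∀ j m, single j (op r • m) ∈ Q :=
    fun _ => single_smul_mem_of_mem_annIn hact hQι hQmax hM
      (isCoatom_componentSubmodule hact hQι hQmax hα).1
  have hAσ := hM.symm_iterate_mem_annIn_iff (componentSubmodule hact hQι α)
  apply subset_antisymm
  · intro s hs
    obtain ⟨c, rfl⟩ := hspan s
    exact ⟨c, coeff_mem_of_forall_smul_mem hact Q α hlow (fun _ => id) hA hAσ
      fun f => mem_of_mem_skewCore (hs f), rfl⟩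
  · refine polyIn_subset_annIn hcomm (skewCore σ ι x hspan hcomm Q hQι).toAddSubgroup
      (fun n r => (hAσ n r).mpr) fun r hr f k => ?_
    rw [xpow_smul_iota_smul σ ι x hcomm]
    exact iota_smul_mem hact Q (fun n r => (hAσ n r).mpr) hA ((hAσ k r).mpr hr) _

end MaximalRSubmodule

def IsRBass {R A : Type*} [Ring R] [Ring A] (ι : R →+* A) (L : Type*) [AddCommGroup L]
    [Module Aᵐᵒᵖ L] : Prop :=
  ∀ Q : Set L, IsRSubmoduleSet ι L Q → Q ≠ Set.univ →
    ∃ Q' : Set L, IsRSubmoduleSet ι L Q' ∧ Q ⊆ Q' ∧ Q' ≠ Set.univ ∧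
      ∀ Q'' : Set L, IsRSubmoduleSet ι L Q'' → Q' ⊆ Q'' → Q'' = Q' ∨ Q'' = Set.univ

section Bass

variable {R : Type*} [Ring R] {σ : R ≃+* R} {S : Type*} [Ring S] {ι : R →+* S} {x : S}
  {M : Type*} [AddCommGroup M] [Module Rᵐᵒᵖ M] [Module Sᵐᵒᵖ (ℕ →₀ M)]
  (hspan : Function.Surjective fun c : ℕ →₀ R => c.sum fun k r => ι r * x ^ k)
  (hcomm : ∀ r : R, x * ι r = ι (σ r) * x) (hact : IsInvPolyAction σ ι x M)
  (hM : IsCompletelyCompatible σ M) (hBass : IsRBass ι (ℕ →₀ M))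
include hspan hcomm hact hM hBass

/-- Enlarge `𝒩` to a maximal `R`-submodule `Q` of `M[x⁻¹]`; if `α` is the first component on
which `Q` is proper, then `B` is that component and `C` the largest `S`-submodule inside `Q`. -/
lemma exists_isCoatom_annIn_eq_polyIn {𝒩 : Submodule Sᵐᵒᵖ (ℕ →₀ M)} (h𝒩 : 𝒩 ≠ ⊤) :
    ∃ (B : Submodule Rᵐᵒᵖ M) (C : Submodule Sᵐᵒᵖ (ℕ →₀ M)), IsCoatom B ∧ 𝒩 ≤ C ∧ C ≠ ⊤ ∧
      annIn S (ℕ →₀ M) C = polyIn ι x (annIn R M B) ∧ ∀ m, (∀ j, single j m ∈ 𝒩) → m ∈ B := by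
  classical
  obtain ⟨Q, hQ, h𝒩Q, hQuniv, hQmax⟩ :=
    hBass 𝒩 (𝒩.isRSubmoduleSet ι) (by simpa using h𝒩)
  have hQι : ∀ r : R, ∀ f ∈ hQ.toAddSubgroup, op (ι r) • f ∈ hQ.toAddSubgroup :=
    fun r f hf => hQ.2.2.2 f hf r
  have hex : ∃ α, ∃ m, single α m ∉ hQ.toAddSubgroup := by
    by_contra! h
    exact hQuniv (Set.eq_univ_of_forall fun f => hQ.toAddSubgroup.mem_of_forall_single_mem
      fun j => h j (f j))
  have hlow : ∀ j < Nat.find hex, ∀ m, single j m ∈ hQ.toAddSubgroup := by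
    intro j hj m
    by_contra hm
    exact Nat.find_min hex hj ⟨m, hm⟩
  refine ⟨componentSubmodule hact hQι (Nat.find hex), skewCore σ ι x hspan hcomm _ hQι,
    isCoatom_componentSubmodule hact hQι hQmax (Nat.find_spec hex),
    le_skewCore fun f hf => h𝒩Q hf, fun htop => hQuniv (Set.eq_univ_of_forall fun f =>
      mem_of_mem_skewCore (htop ▸ Submodule.mem_top : f ∈ skewCore σ ι x hspan hcomm _ hQι)),
    annIn_skewCore_eq hact hQι hQmax hspan hcomm hM hlow (Nat.find_spec hex),
    fun m hm => h𝒩Q (hm _)⟩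

lemma coprimeQuot_invPoly {N : Submodule Rᵐᵒᵖ M} (hN : CoprimeQuot R M N) :
    CoprimeQuot S (ℕ →₀ M) (invPoly hspan hact N) := by
  obtain ⟨⟨m₀, hm₀⟩, hann⟩ := hN
  refine ⟨⟨single 0 m₀, fun h => hm₀ ((single_mem_invPoly hspan hact).mp h)⟩,
    fun 𝒩 hN𝒩 h𝒩 => (annIn_mono hN𝒩).antisymm ?_⟩
  obtain ⟨B, C, hB, h𝒩C, -, hCann, hB𝒩⟩ :=
    exists_isCoatom_annIn_eq_polyIn hspan hcomm hact hM hBass h𝒩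
  have hNB : N ≤ B := fun n hn => hB𝒩 n fun _ => hN𝒩 ((single_mem_invPoly hspan hact).mpr hn)
  calc annIn S (ℕ →₀ M) 𝒩 ⊆ annIn S (ℕ →₀ M) C := annIn_mono h𝒩C
    _ = polyIn ι x (annIn R M B) := hCann
    _ = polyIn ι x (annIn R M N) := by rw [hann B hNB hB.1]
    _ = annIn S (ℕ →₀ M) (invPoly hspan hact N) := (annIn_invPoly hspan hact hcomm hM N).symm

end Bass

theorem attached_primes_inverse_polynomial_skew_eq
    {R : Type*} [Ring R] (σ : R ≃+* R)
    {S : Type*} [Ring S] (ι : R →+* S) (x : S)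
    (hbasis : Function.Bijective fun c : ℕ →₀ R => c.sum fun k r => ι r * x ^ k)
    (hcomm : ∀ r : R, x * ι r = ι (σ r) * x)
    {M : Type*} [AddCommGroup M] [Module Rᵐᵒᵖ M]
    [Module Sᵐᵒᵖ (ℕ →₀ M)]
    (hact : ∀ (m : M) (i : ℕ) (r : R) (j : ℕ),
      op (ι r * x ^ j) • Finsupp.single i m =
        if j ≤ i then Finsupp.single (i - j) (op ((⇑σ.symm)^[i] r) • m)
        else (0 : ℕ →₀ M))
    -- `M[x⁻¹]` is completely `σ`-compatible as a right `R`-module: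
    (hcompatInv : ∀ Q : Set (ℕ →₀ M), IsRSubmoduleSet ι (ℕ →₀ M) Q →
      ∀ (f : ℕ →₀ M) (r : R),
        op (ι r) • f ∈ Q ↔ op (ι (σ r)) • f ∈ Q)
    -- `M[x⁻¹]` is a Bass module as a right `R`-module:
    (hBass : ∀ Q : Set (ℕ →₀ M), IsRSubmoduleSet ι (ℕ →₀ M) Q → Q ≠ Set.univ →
      ∃ Q' : Set (ℕ →₀ M), IsRSubmoduleSet ι (ℕ →₀ M) Q' ∧ Q ⊆ Q' ∧ Q' ≠ Set.univ ∧
        ∀ Q'' : Set (ℕ →₀ M), IsRSubmoduleSet ι (ℕ →₀ M) Q'' → Q' ⊆ Q'' →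
          Q'' = Q' ∨ Q'' = Set.univ) :
    AttSet S (ℕ →₀ M) = {Q : Set S | ∃ P ∈ AttSet R M, Q = polyIn ι x P} := by
  have hM : IsCompletelyCompatible σ M := isCompletelyCompatible_of_inv hbasis.2 hact hcompatInv
  ext P
  constructor
  · rintro ⟨-, 𝒩, h𝒩, rfl⟩
    obtain ⟨B, C, hB, h𝒩C, hC, hCann, -⟩ :=
      exists_isCoatom_annIn_eq_polyIn hbasis.2 hcomm hact hM hBass h𝒩.ne_top
    exact ⟨_, annIn_mem_attSet (CoprimeQuot.of_isCoatom hB), by rw [h𝒩.2 C h𝒩C hC, hCann]⟩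
  · rintro ⟨P, ⟨-, N, hN, rfl⟩, rfl⟩
    rw [← annIn_invPoly hbasis.2 hact hcomm hM N]
    exact annIn_mem_attSet (coprimeQuot_invPoly hbasis.2 hcomm hact hM hBass hN)
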